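/- arXiv:1906.04790 — 4 statements merged into one kernel-verified Lean document; each statement's English description precedes it below -/
import Mathlib

section
/- Let H be a complex Hilbert space, K : H → H compact with I + K injective, and let (Kₙ) be a sequence of bounded linear operators on H such that: (i) Kₙ x → K x for every x ∈ H, and (ii) the family {Kₙ} is collectively compact, i.e. the set {Kₙ x : n ∈ ℕ, ‖x‖ ≤ 1} is relatively compact. Then there exists N such that for all n ≥ N the operator I + Kₙ is invertible, and the inverses (I + Kₙ)⁻¹ are uniformly bounded in operator norm. -/
/-!
By the Fredholm alternative `I + K` has a bounded inverse `S`. Since the `Kₙ` are uniformly bounded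
(Banach–Steinhaus), pointwise convergence `Kₙ → K` is uniform on compact sets, and collective
compactness then turns it into operator-norm convergence `(K - Kₙ) Kₙ → 0` and
`(K - Kₙ) S Kₙ → 0`. From `S (I + K) = (I + K) S = I` one gets
`(I - S Kₙ)(I + Kₙ) = I + S (K - Kₙ) Kₙ` and `(I + Kₙ)(I - S Kₙ) = I + (K - Kₙ) S Kₙ`, so for large
`n` both products are small perturbations of `I`, hence invertible by the Neumann series: `I + Kₙ`
has a left and a right inverse, and the left one has norm at most `2 (1 + ‖S‖ supₙ ‖Kₙ‖)`.
-/

open Filter Topology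

theorem one_sub_mul_mul_one_add {R : Type*} [Ring R] {S K L : R} (h : S * (1 + K) = 1) :
    (1 - S * L) * (1 + L) = 1 + S * ((K - L) * L) := by
  have key : (1 - S * L) * (1 + L) - (1 + S * ((K - L) * L)) = (1 - S * (1 + K)) * L := by
    noncomm_ring
  rwa [h, sub_self, zero_mul, sub_eq_zero] at key

theorem one_add_mul_one_sub_mul {R : Type*} [Ring R] {S K L : R} (h : (1 + K) * S = 1) :
    (1 + L) * (1 - S * L) = 1 + (K - L) * (S * L) := by
  have key : (1 + L) * (1 - S * L) - (1 + (K - L) * (S * L)) = (1 - (1 + K) * S) * L := by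
    noncomm_ring
  rwa [h, sub_self, zero_mul, sub_eq_zero] at key

theorem isUnit_one_add_of_norm_lt_one {R : Type*} [NormedRing R] [HasSummableGeomSeries R]
    {x : R} (h : ‖x‖ < 1) : IsUnit (1 + x) := by
  simpa using isUnit_one_sub_of_norm_lt_one (x := -x) (by rwa [norm_neg])

theorem IsCompactOperator.isUnit_one_add {𝕜 X : Type*} [NontriviallyNormedField 𝕜]
    [NormedAddCommGroup X] [NormedSpace 𝕜 X] [CompleteSpace X] {T : X →L[𝕜] X}
    (hT : IsCompactOperator T) (hinj : Function.Injective ⇑(1 + T)) : IsUnit (1 + T) := by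
  rcases hT.hasEigenvalue_or_mem_resolventSet (μ := -1) (neg_ne_zero.2 one_ne_zero) with h | h
  · obtain ⟨v, hv⟩ := h.exists_hasEigenvector
    refine absurd (hinj ?_) hv.2
    have hTv : T v = -v := by simpa using hv.apply_eq_smul
    simp [hTv]
  · simpa [add_comm] using (spectrum.mem_resolventSet_iff.1 h).neg

namespace ContinuousLinearMap

section UniformOnCompacts

variable {𝕜 E F : Type*} [NontriviallyNormedField 𝕜] [NormedAddCommGroup E] [NormedSpace 𝕜 E]
  [NormedAddCommGroup F] [NormedSpace 𝕜 F]

theorem exists_norm_le_of_tendsto_apply [CompleteSpace E] {T : ℕ → E →L[𝕜] F} {A : E → F}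
    (h : ∀ x, Tendsto (fun n ↦ T n x) atTop (𝓝 (A x))) : ∃ C, ∀ n, ‖T n‖ ≤ C :=
  banach_steinhaus fun x ↦ (isBounded_iff_forall_norm_le.1
    (Metric.isBounded_range_of_tendsto _ (h x))).imp fun _ hC n ↦ hC _ ⟨n, rfl⟩

theorem tendstoUniformlyOn_of_tendsto_apply {ι : Type*} {l : Filter ι} {T : ι → E →L[𝕜] F}
    {A : E → F} {C : ℝ} (hT : ∀ i, ‖T i‖ ≤ C) (h : ∀ x, Tendsto (fun i ↦ T i x) l (𝓝 (A x)))
    {Q : Set E} (hQ : IsCompact Q) : TendstoUniformlyOn (fun i ↦ ⇑(T i)) A l Q := by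
  have hequi : Equicontinuous fun i ↦ ⇑(T i) :=
    ((NormedSpace.equicontinuous_TFAE T).out 5 1).1 (⟨C, hT⟩ : ∃ C, ∀ i, ‖T i‖ ≤ C)
  have hunif := (EquicontinuousOn.tendsto_uniformOnFun_iff_pi' (𝔖 := {Q}) (by simpa using hQ)
    (by simpa using hequi.equicontinuousOn Q) l A).2 (tendsto_pi_nhds.2 fun x ↦ h x)
  exact UniformOnFun.tendsto_iff_tendstoUniformlyOn.1 hunif Q rfl

end UniformOnCompacts

theorem tendsto_sub_comp_of_tendstoUniformlyOn {𝕜 E F G : Type*} [RCLike 𝕜]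
    [NormedAddCommGroup E] [NormedSpace 𝕜 E] [NormedAddCommGroup F] [NormedSpace 𝕜 F]
    [NormedAddCommGroup G] [NormedSpace 𝕜 G] {ι : Type*} {l : Filter ι} {M : ι → F →L[𝕜] G}
    {M₀ : F →L[𝕜] G} {L : ι → E →L[𝕜] F} {Q : Set F}
    (hM : TendstoUniformlyOn (fun i ↦ ⇑(M i)) M₀ l Q) (hL : ∀ i x, ‖x‖ ≤ 1 → L i x ∈ Q) :
    Tendsto (fun i ↦ (M₀ - M i) ∘L L i) l (𝓝 0) := by
  refine NormedAddGroup.tendsto_nhds_zero.2 fun ε hε ↦ ?_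
  filter_upwards [Metric.tendstoUniformlyOn_iff.1 hM (ε / 2) (half_pos hε)] with i hi
  refine (opNorm_le_of_unit_norm (half_pos hε).le fun x hx ↦ ?_).trans_lt (half_lt_self hε)
  simpa [dist_eq_norm] using (hi _ (hL i x hx.le)).le

section PerturbedInverse

variable {𝕜 X : Type*} [NontriviallyNormedField 𝕜] [NormedAddCommGroup X] [NormedSpace 𝕜 X]

theorem one_sub_norm_mul_norm_le_norm_add_apply (T : X →L[𝕜] X) (z : X) :
    (1 - ‖T‖) * ‖z‖ ≤ ‖z + T z‖ := by
  have h : ‖z‖ ≤ ‖z + T z‖ + ‖T z‖ := by simpa using norm_sub_le (z + T z) (T z)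
  linarith [T.le_opNorm z]

theorem norm_one_sub_mul_apply_le (S L : X →L[𝕜] X) (v : X) :
    ‖(1 - S * L) v‖ ≤ (1 + ‖S‖ * ‖L‖) * ‖v‖ :=
  calc ‖(1 - S * L) v‖ ≤ ‖v‖ + ‖(S * L) v‖ := norm_sub_le _ _
    _ ≤ ‖v‖ + ‖S‖ * ‖L‖ * ‖v‖ := by
        gcongr; exact (S * L).le_of_opNorm_le (opNorm_comp_le S L) v
    _ = (1 + ‖S‖ * ‖L‖) * ‖v‖ := by ring

theorem norm_le_of_norm_mul_sub_mul_le_half {S K L : X →L[𝕜] X} (hSK : S * (1 + K) = 1)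
    (hsmall : ‖S * ((K - L) * L)‖ ≤ 1 / 2) (z : X) :
    ‖z‖ ≤ 2 * (1 + ‖S‖ * ‖L‖) * ‖z + L z‖ := by
  have hperturb := one_sub_norm_mul_norm_le_norm_add_apply (S * ((K - L) * L)) z
  have hfactor : z + (S * ((K - L) * L)) z = (1 - S * L) (z + L z) :=
    (congrArg (fun T ↦ T z) (one_sub_mul_mul_one_add (L := L) hSK)).symm
  rw [hfactor] at hperturb
  nlinarith [norm_one_sub_mul_apply_le S L (z + L z),
    mul_nonneg (sub_nonneg.2 hsmall) (norm_nonneg z)]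

theorem bijective_one_add_of_norm_mul_sub_mul_lt_one [CompleteSpace X] {S K L : X →L[𝕜] X}
    (hSK : S * (1 + K) = 1) (hKS : (1 + K) * S = 1) (hleft : ‖S * ((K - L) * L)‖ < 1)
    (hright : ‖(K - L) * (S * L)‖ < 1) : Function.Bijective ⇑(1 + L) := by
  have hl : Function.Bijective ⇑((1 - S * L) * (1 + L)) := by
    rw [← isUnit_iff_bijective, one_sub_mul_mul_one_add hSK]
    exact isUnit_one_add_of_norm_lt_one hleft
  have hr : Function.Bijective ⇑((1 + L) * (1 - S * L)) := by
    rw [← isUnit_iff_bijective, one_add_mul_one_sub_mul hKS]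
    exact isUnit_one_add_of_norm_lt_one hright
  rw [FunLike.coe_mul_eq_comp] at hl hr
  exact ⟨hl.1.of_comp, hr.2.of_comp⟩

end PerturbedInverse

end ContinuousLinearMap

open ContinuousLinearMap in
/-- **Collectively compact operator approximation (Anselone/Kress).**
If `K` is compact with `I + K` injective, `(Kₙ)` converge pointwise to `K`, and the
family `{Kₙ}` is collectively compact (the image of the unit ball under all `Kₙ` is
relatively compact), then for all large `n` the operator `I + Kₙ` is invertible and
the inverses are uniformly bounded: `‖z‖ ≤ C‖(I + Kₙ)z‖` for all `z`. -/
theorem collectively_compact_invertibility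
    {H : Type*} [NormedAddCommGroup H] [InnerProductSpace ℂ H] [CompleteSpace H]
    (K : H →L[ℂ] H) (hK : IsCompactOperator ⇑K)
    (hinj : ∀ z : H, z + K z = 0 → z = 0)
    (Kn : ℕ → H →L[ℂ] H)
    (hpw : ∀ x : H, Tendsto (fun n => Kn n x) atTop (nhds (K x)))
    (hcc : IsCompact (closure {y : H | ∃ n : ℕ, ∃ x : H, ‖x‖ ≤ 1 ∧ Kn n x = y})) :
    ∃ N : ℕ, ∃ C > (0 : ℝ), ∀ n ≥ N,
      Function.Bijective (fun z : H => z + Kn n z) ∧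
      ∀ z : H, ‖z‖ ≤ C * ‖z + Kn n z‖ := by
  have hunit := hK.isUnit_one_add ((injective_iff_map_eq_zero (1 + K)).2 hinj)
  set S : H →L[ℂ] H := ↑hunit.unit⁻¹
  set Q := closure {y : H | ∃ n : ℕ, ∃ x : H, ‖x‖ ≤ 1 ∧ Kn n x = y}
  have hKnQ : ∀ n x, ‖x‖ ≤ 1 → Kn n x ∈ Q :=
    fun n x hx ↦ subset_closure ⟨n, x, hx, rfl⟩
  obtain ⟨R, hR⟩ := exists_norm_le_of_tendsto_apply hpw
  have hleft : Tendsto (fun n ↦ S * ((K - Kn n) * Kn n)) atTop (𝓝 0) := by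
    have h := (tendsto_sub_comp_of_tendstoUniformlyOn
      (tendstoUniformlyOn_of_tendsto_apply hR hpw hcc) hKnQ).const_mul S
    rwa [mul_zero] at h
  have hright : Tendsto (fun n ↦ (K - Kn n) * (S * Kn n)) atTop (𝓝 0) :=
    tendsto_sub_comp_of_tendstoUniformlyOn
      (tendstoUniformlyOn_of_tendsto_apply hR hpw (hcc.image S.continuous))
      fun n x hx ↦ ⟨_, hKnQ n x hx, rfl⟩
  obtain ⟨N, hN⟩ := eventually_atTop.1
    ((NormedAddGroup.tendsto_nhds_zero.1 hleft (1 / 2) (by norm_num)).and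
      (NormedAddGroup.tendsto_nhds_zero.1 hright 1 one_pos))
  have hR0 : 0 ≤ R := (norm_nonneg _).trans (hR 0)
  refine ⟨N, 2 * (1 + ‖S‖ * R), by positivity, fun n hn ↦ ⟨?_, fun z ↦ ?_⟩⟩
  · exact bijective_one_add_of_norm_mul_sub_mul_lt_one hunit.val_inv_mul hunit.mul_val_inv
      ((hN n hn).1.trans (by norm_num)) (hN n hn).2
  · refine (norm_le_of_norm_mul_sub_mul_le_half hunit.val_inv_mul (hN n hn).1.le z).trans ?_
    gcongr
    exact hR n
end

section
/- Let H₁, H₂ be complex Hilbert spaces, ω > 0, γ > 0, ωₚ > 0, ε₀ > 0, and let b₁ : H₁ × H₁ → ℂ, b₂ : H₂ × H₂ → ℂ be Hermitian sesquilinear forms with b₁(u,u) ≥ 0 and b₂(v,v) ≥ 0 for all u, v. Let T : H₂ → H₁ be a bounded linear map. Suppose (E, J) ∈ H₁ × H₂ satisfies: b₁(E,u) − ω²⟨E,u⟩₁ − iω c(E,u) = iω ⟨TJ, u⟩₁ for all u ∈ H₁, where c is a Hermitian nonnegative form on H₁, and b₂(J,v) − ω(ω + iγ)⟨J,v⟩₂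 = −iω ωₚ² ε₀ ⟨T*E, v⟩₂ for all v ∈ H₂. Then taking imaginary parts with u = E, v = J yields: −c(E,E) = Re⟨TJ, E⟩₁ and (γ/(ωₚ²ε₀))‖J‖₂² = Re⟨T*E, J⟩₂; since ⟨TJ,E⟩₁ = conj(⟨T*E,J⟩₂), it follows that J = 0 and c(E,E) = 0. -/
open scoped InnerProductSpace
open ComplexConjugate

/-- **Abstract energy/uniqueness argument (Lemma 3.1 of the paper).**
`b₁, b₂` are Hermitian nonnegative forms, `c` is a Hermitian nonnegative form
(the boundary term `‖E_T‖²`), `T` is the bounded extension-by-zero operator and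
`⟨x,u⟩ᵢ` denotes the inner product, linear in the first argument (encoded below as
`⟪u, x⟫_ℂ`).  If `(E, J)` satisfies the two coupled variational equations, then
`J = 0` and `c(E,E) = 0`. -/
theorem coupled_system_energy_uniqueness
    {H1 H2 : Type*} [NormedAddCommGroup H1] [InnerProductSpace ℂ H1] [CompleteSpace H1]
    [NormedAddCommGroup H2] [InnerProductSpace ℂ H2] [CompleteSpace H2]
    (ω γ ωp ε0 : ℝ) (hω : 0 < ω) (hγ : 0 < γ) (hωp : 0 < ωp) (hε0 : 0 < ε0)
    (b1 : H1 → H1 → ℂ) (b2 : H2 → H2 → ℂ) (c : H1 → H1 → ℂ)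
    (hb1herm : ∀ u v : H1, b1 u v = conj (b1 v u)) (hb1pos : ∀ u : H1, 0 ≤ (b1 u u).re)
    (hb2herm : ∀ u v : H2, b2 u v = conj (b2 v u)) (hb2pos : ∀ u : H2, 0 ≤ (b2 u u).re)
    (hcherm : ∀ u v : H1, c u v = conj (c v u)) (hcpos : ∀ u : H1, 0 ≤ (c u u).re)
    (T : H2 →L[ℂ] H1) (E : H1) (J : H2)
    (heq1 : ∀ u : H1,
      b1 E u - (ω : ℂ) ^ 2 * ⟪u, E⟫_ℂ - Complex.I * (ω : ℂ) * c E u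
        = Complex.I * (ω : ℂ) * ⟪u, T J⟫_ℂ)
    (heq2 : ∀ v : H2,
      b2 J v - (ω : ℂ) * ((ω : ℂ) + Complex.I * (γ : ℂ)) * ⟪v, J⟫_ℂ
        = -(Complex.I * (ω : ℂ) * (ωp : ℂ) ^ 2 * (ε0 : ℂ))
            * ⟪v, ContinuousLinearMap.adjoint T E⟫_ℂ) :
    J = 0 ∧ c E E = 0 := by
  have hb1im : (b1 E E).im = 0 := by
    have h := congrArg Complex.im (hb1herm E E)
    simp [Complex.conj_im] at h; linarith
  have hb2im : (b2 J J).im = 0 := by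
    have h := congrArg Complex.im (hb2herm J J)
    simp [Complex.conj_im] at h; linarith
  have hcim : (c E E).im = 0 := by
    have h := congrArg Complex.im (hcherm E E)
    simp [Complex.conj_im] at h; linarith
  have hEim : (⟪E, E⟫_ℂ : ℂ).im = 0 := by
    have h := congrArg Complex.im (inner_conj_symm E E)
    rw [Complex.conj_im] at h; linarith
  have hJim : (⟪J, J⟫_ℂ : ℂ).im = 0 := by
    have h := congrArg Complex.im (inner_conj_symm J J)
    rw [Complex.conj_im] at h; linarith
  have hJre : (⟪J, J⟫_ℂ : ℂ).re = ‖J‖ * ‖J‖ := by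
    rw [inner_self_eq_norm_sq_to_K (𝕜 := ℂ) J]
    push_cast
    simp [pow_two]
  have hq : (⟪J, ContinuousLinearMap.adjoint T E⟫_ℂ : ℂ) = conj (⟪E, T J⟫_ℂ : ℂ) := by
    rw [ContinuousLinearMap.adjoint_inner_right, ← inner_conj_symm]
  have h1 := congrArg Complex.im (heq1 E)
  have h2 := congrArg Complex.im (heq2 J)
  rw [hq] at h2
  simp [Complex.sub_im, Complex.add_im, Complex.mul_im, Complex.mul_re, Complex.add_re,
    pow_two, hb1im, hb2im, hcim, hEim, hJim, hJre, Complex.conj_re, Complex.conj_im] at h1 h2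
  have hre : (⟪T J, E⟫_ℂ : ℂ).re = (⟪E, T J⟫_ℂ : ℂ).re := by
    rw [← inner_conj_symm (T J) E, Complex.conj_re]
  have hp : (⟪E, T J⟫_ℂ : ℂ).re = -(c E E).re := by
    have h : ω * (-(c E E).re) = ω * (⟪E, T J⟫_ℂ : ℂ).re := by linarith
    exact (mul_left_cancel₀ hω.ne' h).symm
  rw [hre, hp] at h2
  have key : γ * (‖J‖ * ‖J‖) + (ωp * ωp) * ε0 * (c E E).re = 0 := by
    have h : ω * (γ * (‖J‖ * ‖J‖) + (ωp * ωp) * ε0 * (c E E).re) = 0 := by ring_nf; ring_nf at h2; linarith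
    exact (mul_eq_zero.mp h).resolve_left hω.ne'
  have hce := hcpos E
  have t1 : 0 ≤ γ * (‖J‖ * ‖J‖) := by positivity
  have t2 : 0 ≤ (ωp * ωp) * ε0 * (c E E).re := by
    apply mul_nonneg (by positivity) hce
  have hJn : ‖J‖ * ‖J‖ = 0 := by nlinarith
  have hc0 : (c E E).re = 0 := by nlinarith [mul_pos (mul_pos hωp hωp) hε0]
  refine ⟨norm_eq_zero.mp (mul_self_eq_zero.mp hJn), Complex.ext hc0 hcim⟩
end

section
/- Let γ, β, ω, ωₚ > 0 and μ, ε : Ω → ℝ piecewise-constant positive functions taking values in {μ₁, μ₂} and {ε₁, ε₂}. Define on X₀ × Y₀ (closed subspaces of H_T(curl;Ω) × H₀(div;Ωₛ)) the sesquilinear form a₊(û, v̂) = (μ⁻¹∇×u₁, ∇×v₁) + ω²(ε u₁, v₁) − iω⟨u₁,T, v₁,T⟩_{∂Ω} + β²(∇·u₂, ∇·v₂) + ω(ω − iγ)(u₂, v₂). Then there exists α > 0 depending only on μ₁, μ₂, ε₁, ε₂, γ, β, ω, ωₚ such that |a₊(û, û)| ≥ α(‖u₁‖²_{H(curl;Ω)}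 + ‖u₂‖²_{H(div;Ωₛ)}) for all û = (u₁, u₂) ∈ X₀ × Y₀. -/
open scoped InnerProductSpace

/-- **Coercivity in modulus of the auxiliary form `a₊` (Lemma 3.4 of the paper),
abstract operator form.**  `X` and `Y` stand for `X₀(Ω)` and `Y₀(Ωₛ)` with their graph
inner products; `ι, ιY` are the embeddings into the `L²` spaces `L0, M0`;
`curl, dvg, tr` are the (bounded on the graph spaces) curl, divergence and tangential
trace operators; `εop` and `μinv` are the self-adjoint coercive multiplication operators
by `ε` and `μ⁻¹` (with lower bounds `cε, cμ` encoding the positive constants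
`ε₁, ε₂, μ₁, μ₂`).  Then there is `α > 0`, depending only on the physical constants,
with `|a₊(û,û)| ≥ α(‖u₁‖²_{H(curl)} + ‖u₂‖²_{H(div)})`. -/
theorem aplus_coercive_in_modulus
    {X Y L0 L1 L3 M0 M1 : Type*}
    [NormedAddCommGroup X] [InnerProductSpace ℂ X] [CompleteSpace X]
    [NormedAddCommGroup Y] [InnerProductSpace ℂ Y] [CompleteSpace Y]
    [NormedAddCommGroup L0] [InnerProductSpace ℂ L0] [CompleteSpace L0]
    [NormedAddCommGroup L1] [InnerProductSpace ℂ L1] [CompleteSpace L1]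
    [NormedAddCommGroup L3] [InnerProductSpace ℂ L3] [CompleteSpace L3]
    [NormedAddCommGroup M0] [InnerProductSpace ℂ M0] [CompleteSpace M0]
    [NormedAddCommGroup M1] [InnerProductSpace ℂ M1] [CompleteSpace M1]
    (ω γ β ωp cμ cε : ℝ)
    (hω : 0 < ω) (hγ : 0 < γ) (hβ : 0 < β) (hωp : 0 < ωp) (hcμ : 0 < cμ) (hcε : 0 < cε)
    (ι : X →L[ℂ] L0) (curl : X →L[ℂ] L1) (tr : X →L[ℂ] L3)
    (ιY : Y →L[ℂ] M0) (dvg : Y →L[ℂ] M1)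
    (εop : L0 →L[ℂ] L0) (μinv : L1 →L[ℂ] L1)
    (hεsa : IsSelfAdjoint εop) (hμsa : IsSelfAdjoint μinv)
    (hε : ∀ w : L0, cε * ‖w‖ ^ 2 ≤ (⟪εop w, w⟫_ℂ).re)
    (hμ : ∀ w : L1, cμ * ‖w‖ ^ 2 ≤ (⟪μinv w, w⟫_ℂ).re)
    (aplus : (X × Y) → (X × Y) → ℂ)
    (haplus : ∀ u v : X × Y,
      aplus u v =
        ⟪curl v.1, μinv (curl u.1)⟫_ℂ + (ω : ℂ) ^ 2 * ⟪ι v.1, εop (ι u.1)⟫_ℂ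
          - Complex.I * (ω : ℂ) * ⟪tr v.1, tr u.1⟫_ℂ
          + (β : ℂ) ^ 2 * ⟪dvg v.2, dvg u.2⟫_ℂ
          + (ω : ℂ) * ((ω : ℂ) - Complex.I * (γ : ℂ)) * ⟪ιY v.2, ιY u.2⟫_ℂ) :
    ∃ α > (0 : ℝ), ∀ u : X × Y,
      α * (‖ι u.1‖ ^ 2 + ‖curl u.1‖ ^ 2 + ‖ιY u.2‖ ^ 2 + ‖dvg u.2‖ ^ 2)
        ≤ ‖aplus u u‖ := by
  refine ⟨min (min cμ (ω ^ 2 * cε)) (min (β ^ 2) (ω ^ 2)), ?_, ?_⟩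
  · have := mul_pos (mul_pos hω hω) hcε
    positivity
  intro u
  set α := min (min cμ (ω ^ 2 * cε)) (min (β ^ 2) (ω ^ 2)) with hαdef
  have hα1 : α ≤ cμ := le_trans (min_le_left _ _) (min_le_left _ _)
  have hα2 : α ≤ ω ^ 2 * cε := le_trans (min_le_left _ _) (min_le_right _ _)
  have hα3 : α ≤ β ^ 2 := le_trans (min_le_right _ _) (min_le_left _ _)
  have hα4 : α ≤ ω ^ 2 := le_trans (min_le_right _ _) (min_le_right _ _)
  have h1 : cμ * ‖curl u.1‖ ^ 2 ≤ (⟪curl u.1, μinv (curl u.1)⟫_ℂ).re := by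
    rw [← inner_conj_symm, Complex.conj_re]
    exact hμ (curl u.1)
  have h2 : cε * ‖ι u.1‖ ^ 2 ≤ (⟪ι u.1, εop (ι u.1)⟫_ℂ).re := by
    rw [← inner_conj_symm, Complex.conj_re]
    exact hε (ι u.1)
  have e3 : ⟪tr u.1, tr u.1⟫_ℂ = ((‖tr u.1‖ : ℂ)) ^ 2 := inner_self_eq_norm_sq_to_K _
  have e4 : ⟪dvg u.2, dvg u.2⟫_ℂ = ((‖dvg u.2‖ : ℂ)) ^ 2 := inner_self_eq_norm_sq_to_K _
  have e5 : ⟪ιY u.2, ιY u.2⟫_ℂ = ((‖ιY u.2‖ : ℂ)) ^ 2 := inner_self_eq_norm_sq_to_K _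
  have hre : (aplus u u).re =
      (⟪curl u.1, μinv (curl u.1)⟫_ℂ).re + ω ^ 2 * (⟪ι u.1, εop (ι u.1)⟫_ℂ).re
        + β ^ 2 * ‖dvg u.2‖ ^ 2 + ω ^ 2 * ‖ιY u.2‖ ^ 2 := by
    rw [haplus u u, e3, e4, e5]
    simp [Complex.add_re, Complex.sub_re, Complex.mul_re, Complex.mul_im,
      Complex.I_re, Complex.I_im, Complex.ofReal_re, Complex.ofReal_im, pow_two]
  have key : α * (‖ι u.1‖ ^ 2 + ‖curl u.1‖ ^ 2 + ‖ιY u.2‖ ^ 2 + ‖dvg u.2‖ ^ 2)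
      ≤ (aplus u u).re := by
    rw [hre]
    have n1 : (0:ℝ) ≤ ‖ι u.1‖ ^ 2 := sq_nonneg _
    have n2 : (0:ℝ) ≤ ‖curl u.1‖ ^ 2 := sq_nonneg _
    have n3 : (0:ℝ) ≤ ‖ιY u.2‖ ^ 2 := sq_nonneg _
    have n4 : (0:ℝ) ≤ ‖dvg u.2‖ ^ 2 := sq_nonneg _
    nlinarith [mul_le_mul_of_nonneg_right hα1 n2, mul_le_mul_of_nonneg_right hα2 n1,
      mul_le_mul_of_nonneg_right hα3 n4, mul_le_mul_of_nonneg_right hα4 n3,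
      mul_le_mul_of_nonneg_left h1 (le_of_lt (lt_of_lt_of_le zero_lt_one le_rfl)),
      mul_le_mul_of_nonneg_left h2 (sq_nonneg ω)]
  calc α * (‖ι u.1‖ ^ 2 + ‖curl u.1‖ ^ 2 + ‖ιY u.2‖ ^ 2 + ‖dvg u.2‖ ^ 2)
      ≤ (aplus u u).re := key
    _ ≤ |(aplus u u).re| := le_abs_self _
    _ ≤ ‖aplus u u‖ := Complex.abs_re_le_norm _
end

section
/- Let V and Q be complex Hilbert spaces, a : V × V → ℂ a bounded sesquilinear form, b : V × Q → ℂ a bounded sesquilinear form. Assume: (i) there is α > 0 with |a(u,u)| ≥ α‖u‖² for all u in the kernel Z = {v ∈ V : b(v,q) = 0 ∀q ∈ Q}; (ii) b satisfies the inf-sup condition: inf_{q≠0} sup_{v≠0} |b(v,q)|/(‖v‖‖q‖) ≥ β > 0. Then for every bounded conjugate-linear functional F on V, the mixed problem — find (u, p) ∈ V × Q with a(u,v) + b(v,p) = F(v) for all v ∈ V and b(u,q) = 0 for all q ∈ Q — has a unique solution, and ‖u‖ + ‖p‖ ≤ C‖F‖. -/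
/-!
Riesz representation turns the forms into operators `A : V →L V` and `B : V →L Q` with
`a u v = ⟪v, A u⟫` and `b v q = ⟪B v, q⟫`, and `F` into a vector `f`; the mixed problem becomes
`A u + B† p = f`, `B u = 0`. The inf-sup condition says that `B†` is bounded below, so its range is
closed and hence equal to `(ker B)ᗮ`. Coercivity in modulus on `Z = ker B` makes the compression of
`A` to `Z` invertible, which yields `u ∈ Z` with `f - A u ⊥ Z`, i.e. `f - A u = B† p`. Testing the
equation with `u` kills the `B† p` term and gives `α‖u‖ ≤ ‖f‖`; then `β‖p‖ ≤ ‖B† p‖ = ‖f - A u‖`.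
Applied to the difference of two solutions these bounds give uniqueness.
-/

open InnerProductSpace ContinuousLinearMap
open scoped InnerProduct

section

variable {𝕜 V Q : Type*} [RCLike 𝕜]
  [NormedAddCommGroup V] [InnerProductSpace 𝕜 V]
  [NormedAddCommGroup Q] [InnerProductSpace 𝕜 Q]

theorem le_norm_of_mul_norm_le_norm_inner {c : ℝ} {v y : V} (hv : v ≠ 0)
    (h : c * ‖v‖ ≤ ‖⟪v, y⟫_𝕜‖) : c ≤ ‖y‖ :=
  le_of_mul_le_mul_right (h.trans ((norm_inner_le_norm v y).trans_eq (mul_comm _ _)))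
    (norm_pos_iff.2 hv)

theorem mul_norm_le_of_mul_sq_le_norm_inner {α : ℝ} {x y : V}
    (h : α * ‖x‖ ^ 2 ≤ ‖⟪x, y⟫_𝕜‖) : α * ‖x‖ ≤ ‖y‖ := by
  rcases eq_or_ne x 0 with rfl | hx
  · simp
  · exact le_norm_of_mul_norm_le_norm_inner hx (by rwa [mul_assoc, ← sq])

theorem ContinuousLinearMap.isClosed_range_of_mul_norm_le [CompleteSpace V] (T : V →L[𝕜] Q)
    {c : ℝ} (hc : 0 < c) (h : ∀ x, c * ‖x‖ ≤ ‖T x‖) : IsClosed (T.range : Set Q) := by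
  refine (T.antilipschitz_of_bound (K := (Real.toNNReal c)⁻¹) fun x => ?_).isClosed_range
    T.uniformContinuous
  rw [NNReal.coe_inv, Real.coe_toNNReal _ hc.le, inv_mul_eq_div, le_div_iff₀ hc, mul_comm]
  exact h x

theorem ContinuousLinearMap.orthogonal_ker_eq_range_adjoint [CompleteSpace V] [CompleteSpace Q]
    (B : V →L[𝕜] Q) (h : IsClosed (B†.range : Set V)) : B.kerᗮ = B†.range := by
  rw [B.orthogonal_ker, h.submodule_topologicalClosure_eq]

theorem ContinuousLinearMap.bijective_compression_of_le_norm_inner [CompleteSpace V]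
    (A : V →L[𝕜] V) (Z : Submodule 𝕜 V) [CompleteSpace Z] {α : ℝ} (hα : 0 < α)
    (h : ∀ z ∈ Z, α * ‖z‖ ^ 2 ≤ ‖⟪z, A z⟫_𝕜‖) :
    Function.Bijective (Z.subtypeL† ∘L A ∘L Z.subtypeL) := by
  refine isUnit_iff_bijective.1 (isUnit_of_forall_le_norm_inner_map _
    (c := Real.toNNReal α) (Real.toNNReal_pos.2 hα) fun z => ?_)
  rw [Real.coe_toNNReal _ hα.le, mul_comm, comp_apply, comp_apply, adjoint_inner_left,
    norm_inner_symm]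
  exact h z z.2

section Mixed

variable [CompleteSpace V] [CompleteSpace Q] (A : V →L[𝕜] V) (B : V →L[𝕜] Q) {α β : ℝ}

theorem mul_norm_le_of_mixed_primal (hcoer : ∀ u, B u = 0 → α * ‖u‖ ^ 2 ≤ ‖⟪u, A u⟫_𝕜‖)
    {f u : V} {p : Q} (heq : A u + (B†) p = f) (hu : B u = 0) : α * ‖u‖ ≤ ‖f‖ := by
  have hAu : ⟪u, A u⟫_𝕜 = ⟪u, f⟫_𝕜 := by
    rw [← heq, inner_add_right, adjoint_inner_right, hu, inner_zero_left, add_zero]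
  exact mul_norm_le_of_mul_sq_le_norm_inner (hAu ▸ hcoer u hu)

theorem mul_norm_le_of_mixed_multiplier (hinfsup : ∀ q, β * ‖q‖ ≤ ‖(B†) q‖)
    {f u : V} {p : Q} (heq : A u + (B†) p = f) : β * ‖p‖ ≤ ‖f‖ + ‖A‖ * ‖u‖ :=
  calc β * ‖p‖ ≤ ‖(B†) p‖ := hinfsup p
    _ = ‖f - A u‖ := by rw [← heq, add_sub_cancel_left]
    _ ≤ ‖f‖ + ‖A u‖ := norm_sub_le _ _
    _ ≤ ‖f‖ + ‖A‖ * ‖u‖ := by gcongr; exact A.le_opNorm u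

theorem norm_add_norm_le_of_mixed (hα : 0 < α) (hβ : 0 < β)
    (hcoer : ∀ u, B u = 0 → α * ‖u‖ ^ 2 ≤ ‖⟪u, A u⟫_𝕜‖) (hinfsup : ∀ q, β * ‖q‖ ≤ ‖(B†) q‖)
    {f u : V} {p : Q} (heq : A u + (B†) p = f) (hu : B u = 0) :
    ‖u‖ + ‖p‖ ≤ (α⁻¹ + β⁻¹ * (1 + ‖A‖ * α⁻¹)) * ‖f‖ := by
  have hu_le : ‖u‖ ≤ α⁻¹ * ‖f‖ := by
    rw [inv_mul_eq_div, le_div_iff₀' hα]; exact mul_norm_le_of_mixed_primal A B hcoer heq hu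
  have hp_le : ‖p‖ ≤ β⁻¹ * (‖f‖ + ‖A‖ * ‖u‖) := by
    rw [inv_mul_eq_div, le_div_iff₀' hβ]; exact mul_norm_le_of_mixed_multiplier A B hinfsup heq
  calc ‖u‖ + ‖p‖ ≤ α⁻¹ * ‖f‖ + β⁻¹ * (‖f‖ + ‖A‖ * (α⁻¹ * ‖f‖)) := by
        gcongr
        exact hp_le.trans (by gcongr)
    _ = (α⁻¹ + β⁻¹ * (1 + ‖A‖ * α⁻¹)) * ‖f‖ := by ring

theorem exists_mixed (hα : 0 < α) (hβ : 0 < β)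
    (hcoer : ∀ u, B u = 0 → α * ‖u‖ ^ 2 ≤ ‖⟪u, A u⟫_𝕜‖) (hinfsup : ∀ q, β * ‖q‖ ≤ ‖(B†) q‖)
    (f : V) : ∃ u p, A u + (B†) p = f ∧ B u = 0 := by
  set Z := B.ker
  have : CompleteSpace Z := B.isClosed_ker.completeSpace_coe
  obtain ⟨z, hz⟩ := (A.bijective_compression_of_le_norm_inner Z hα hcoer).2 ((Z.subtypeL†) f)
  have hres : f - A z ∈ Zᗮ := by
    rw [← Z.orthogonalProjectionOnto_eq_zero_iff, ← Z.adjoint_subtypeL, map_sub, ← hz]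
    exact sub_self _
  rw [B.orthogonal_ker_eq_range_adjoint
    (B†.isClosed_range_of_mul_norm_le hβ hinfsup)] at hres
  obtain ⟨p, hp⟩ := hres
  exact ⟨z, p, eq_sub_iff_add_eq'.1 hp, z.2⟩

theorem existsUnique_mixed_and_norm_le (hα : 0 < α) (hβ : 0 < β)
    (hcoer : ∀ u, B u = 0 → α * ‖u‖ ^ 2 ≤ ‖⟪u, A u⟫_𝕜‖) (hinfsup : ∀ q, β * ‖q‖ ≤ ‖(B†) q‖) :
    ∃ C > (0 : ℝ), ∀ f : V,
      (∃! up : V × Q, A up.1 + (B†) up.2 = f ∧ B up.1 = 0) ∧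
      ∀ up : V × Q, A up.1 + (B†) up.2 = f ∧ B up.1 = 0 → ‖up.1‖ + ‖up.2‖ ≤ C * ‖f‖ := by
  refine ⟨α⁻¹ + β⁻¹ * (1 + ‖A‖ * α⁻¹), by positivity, fun f => ⟨?_, fun up hup =>
    norm_add_norm_le_of_mixed A B hα hβ hcoer hinfsup hup.1 hup.2⟩⟩
  obtain ⟨u, p, heq, hu⟩ := exists_mixed A B hα hβ hcoer hinfsup f
  refine ⟨(u, p), ⟨heq, hu⟩, fun ⟨u', p'⟩ ⟨heq', hu'⟩ => ?_⟩
  have heq_diff : A (u' - u) + (B†) (p' - p) = 0 := by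
    rw [map_sub, map_sub, ← add_sub_add_comm, heq, heq', sub_self]
  have hdiff := norm_add_norm_le_of_mixed A B hα hβ hcoer hinfsup heq_diff
    (by rw [map_sub, hu, hu', sub_self])
  rw [norm_zero, mul_zero] at hdiff
  obtain ⟨hu0, hp0⟩ := (add_eq_zero_iff_of_nonneg (norm_nonneg _) (norm_nonneg _)).1
    (le_antisymm hdiff (by positivity))
  exact Prod.ext (norm_sub_eq_zero_iff.1 hu0) (norm_sub_eq_zero_iff.1 hp0)

end Mixed

noncomputable def continuousLinearMapOfSesq [CompleteSpace Q] (b : V →L⋆[𝕜] Q →L[𝕜] 𝕜) :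
    V →L[𝕜] Q :=
  (toDual 𝕜 Q).symm.toContinuousLinearEquiv.toContinuousLinearMap.comp b

@[simp]
theorem inner_continuousLinearMapOfSesq [CompleteSpace Q] (b : V →L⋆[𝕜] Q →L[𝕜] 𝕜)
    (v : V) (q : Q) : ⟪continuousLinearMapOfSesq b v, q⟫_𝕜 = b v q := by
  simp [continuousLinearMapOfSesq]

noncomputable def rieszConj [CompleteSpace V] (F : V →L⋆[𝕜] 𝕜) : V :=
  (toDual 𝕜 V).symm ((starₗᵢ 𝕜).toLinearIsometry.toContinuousLinearMap.comp F)

@[simp]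
theorem inner_rieszConj [CompleteSpace V] (F : V →L⋆[𝕜] 𝕜) (v : V) :
    ⟪v, rieszConj F⟫_𝕜 = F v := by
  rw [← inner_conj_symm, rieszConj, toDual_symm_apply]
  simp

@[simp]
theorem norm_rieszConj [CompleteSpace V] (F : V →L⋆[𝕜] 𝕜) : ‖rieszConj F‖ = ‖F‖ := by
  rw [rieszConj, LinearIsometryEquiv.norm_map, LinearIsometry.norm_toContinuousLinearMap_comp]

end

/-- **Babuška–Brezzi well-posedness for complex mixed (saddle-point) problems.**
`a` is a bounded sesquilinear form on `V` (linear in the first, conjugate-linear in the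
second argument), `b` a bounded sesquilinear form on `V × Q` (conjugate-linear in the
`V`-argument, which plays the role of the test function).  Assume `a` is coercive in
modulus on the kernel `Z = {v : b(v,q) = 0 ∀q}` and `b` satisfies the inf-sup
condition.  Then for each bounded conjugate-linear functional `F` the mixed problem has
a unique solution `(u,p)` with `‖u‖ + ‖p‖ ≤ C‖F‖`. -/
theorem babuska_brezzi_wellposed
    {V Q : Type*} [NormedAddCommGroup V] [InnerProductSpace ℂ V] [CompleteSpace V]
    [NormedAddCommGroup Q] [InnerProductSpace ℂ Q] [CompleteSpace Q]
    (a : V →L[ℂ] V →L⋆[ℂ] ℂ) (b : V →L⋆[ℂ] Q →L[ℂ] ℂ)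
    (α βc : ℝ) (hα : 0 < α) (hβc : 0 < βc)
    (hcoer : ∀ u : V, (∀ q : Q, b u q = 0) → α * ‖u‖ ^ 2 ≤ ‖a u u‖)
    (hinfsup : ∀ q : Q, ∃ v : V, v ≠ 0 ∧ βc * ‖v‖ * ‖q‖ ≤ ‖b v q‖) :
    ∃ C > (0 : ℝ), ∀ F : V →L⋆[ℂ] ℂ,
      (∃! up : V × Q, (∀ v : V, a up.1 v + b v up.2 = F v) ∧ ∀ q : Q, b up.1 q = 0) ∧
      ∀ up : V × Q,
        ((∀ v : V, a up.1 v + b v up.2 = F v) ∧ ∀ q : Q, b up.1 q = 0) →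
        ‖up.1‖ + ‖up.2‖ ≤ C * ‖F‖ := by
  set A := (continuousLinearMapOfBilin a.flip)†
  set B := continuousLinearMapOfSesq b
  have hA : ∀ u v, a u v = ⟪v, A u⟫_ℂ := fun u v => by simp [A, adjoint_inner_right]
  have hB : ∀ v q, b v q = ⟪v, (B†) q⟫_ℂ := fun v q => by simp [B, adjoint_inner_right]
  have hker : ∀ u, (∀ q, b u q = 0) ↔ B u = 0 := fun u => by
    rw [ext_iff_inner_right ℂ]
    simp [B]
  have hinfsup' : ∀ q, βc * ‖q‖ ≤ ‖(B†) q‖ := fun q => by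
    obtain ⟨v, hv, hle⟩ := hinfsup q
    exact le_norm_of_mul_norm_le_norm_inner hv (by rwa [mul_right_comm, ← hB])
  obtain ⟨C, hC, hsol⟩ := existsUnique_mixed_and_norm_le A B hα hβc
    (fun u hu => hA u u ▸ hcoer u ((hker u).2 hu)) hinfsup'
  refine ⟨C, hC, fun F => ?_⟩
  have hsys : ∀ up : V × Q, ((∀ v, a up.1 v + b v up.2 = F v) ∧ ∀ q, b up.1 q = 0) ↔
      A up.1 + (B†) up.2 = rieszConj F ∧ B up.1 = 0 := fun up =>
    and_congr (by rw [ext_iff_inner_left ℂ]; simp only [inner_add_right, inner_rieszConj, hA, hB])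
      (hker up.1)
  simp only [hsys]
  simpa using hsol (rieszConj F)
end
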